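/- arXiv:1603.06743 — 4 statements merged into one kernel-verified Lean document; each statement's English description precedes it below -/
import Mathlib

section
/- (Proposition 1, per-block form.) Let d, n be positive natural numbers, let r : Fin n → Fin n → ℝ satisfy r i j ≥ 0, r i j = r j i, r i i = 0, fix k ∈ Fin n and vectors w_1,…,w_n ∈ ℝ^d such that w_i ≠ w_k for every i with r i k ≠ 0. Then the function g : ℝ^d → ℝ defined by g(u) = Σ_{i,j=1}^n r_{ij} ‖v_i(u) − v_j(u)‖₂, where v_k(u) = u and v_i(u) = w_i for i ≠ k, is differentiable at w_k, and its gradient at w_k equals 2 Σ_{i=1}^n r_{ik} (w_k − w_i)/‖w_k − w_i‖₂ (terms with r_{ik} = 0 being zero). -/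
/-!
Only the terms of the regularizer that involve the `k`-th block depend on `u`; by symmetry of `r`
they add up to `2 ∑_{i ≠ k} r_{ik} ‖u - w_i‖`, the rest being constant. Each `‖u - w_i‖` with
`r_{ik} ≠ 0` is smooth near `u = w_k ≠ w_i`, with gradient `(w_k - w_i) / ‖w_k - w_i‖`.
-/

open Finset Function

section GradientAlgebra

variable {E : Type*} [NormedAddCommGroup E] [InnerProductSpace ℝ E] [CompleteSpace E]
  {f : E → ℝ} {f' x : E}

theorem HasGradientAt.const_mul (c : ℝ) (hf : HasGradientAt f f' x) :
    HasGradientAt (fun u => c * f u) (c • f') x := by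
  rw [hasGradientAt_iff_hasFDerivAt, map_smul]
  exact (hasGradientAt_iff_hasFDerivAt.1 hf).const_mul c

theorem HasGradientAt.add_const (hf : HasGradientAt f f' x) (c : ℝ) :
    HasGradientAt (fun u => f u + c) f' x :=
  hasGradientAt_iff_hasFDerivAt.2 ((hasGradientAt_iff_hasFDerivAt.1 hf).add_const c)

theorem HasGradientAt.sum {ι : Type*} {s : Finset ι} {f : ι → E → ℝ} {f' : ι → E}
    (h : ∀ i ∈ s, HasGradientAt (f i) (f' i) x) :
    HasGradientAt (fun u => ∑ i ∈ s, f i u) (∑ i ∈ s, f' i) x := by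
  rw [hasGradientAt_iff_hasFDerivAt, map_sum]
  exact HasFDerivAt.fun_sum h

theorem hasGradientAt_norm (hx : x ≠ 0) : HasGradientAt (‖·‖) (‖x‖⁻¹ • x) x := by
  have hsq : HasFDerivAt (fun u : E => ‖u‖ ^ 2) (2 • innerSL ℝ x) x :=
    (hasStrictFDerivAt_norm_sq x).hasFDerivAt
  have h := hsq.sqrt (by positivity)
  simp only [Real.sqrt_sq (norm_nonneg _)] at h
  refine hasGradientAt_iff_hasFDerivAt.2 (h.congr_fderiv ?_)
  ext y
  simp
  field_simp

theorem hasGradientAt_const_mul_norm_sub {a : E} {c : ℝ} (h : c ≠ 0 → x ≠ a) :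
    HasGradientAt (fun u => c * ‖u - a‖) ((c / ‖x - a‖) • (x - a)) x := by
  rcases eq_or_ne c 0 with rfl | hc
  · simpa using hasGradientAt_const x (0 : ℝ)
  have hnorm : HasFDerivAt (‖·‖) (InnerProductSpace.toDual ℝ E (‖x - a‖⁻¹ • (x - a))) (x - a) :=
    hasGradientAt_norm (sub_ne_zero.2 (h hc))
  have hshift : HasGradientAt (‖· - a‖) (‖x - a‖⁻¹ • (x - a)) x :=
    (hnorm.comp x ((hasFDerivAt_id x).sub_const a)).congr_fderiv (ContinuousLinearMap.comp_id _)
  simpa [smul_smul, div_eq_mul_inv] using hshift.const_mul c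

end GradientAlgebra

theorem sum_sum_mul_norm_update_sub_update {ι E : Type*} [Fintype ι] [DecidableEq ι]
    [SeminormedAddCommGroup E] {r : ι → ι → ℝ} (hr : ∀ i j, r i j = r j i)
    (w : ι → E) (k : ι) (u : E) :
    ∑ i, ∑ j, r i j * ‖update w k u i - update w k u j‖ =
      ∑ i ∈ {k}ᶜ, 2 * r i k * ‖u - w i‖ + ∑ i ∈ {k}ᶜ, ∑ j ∈ {k}ᶜ, r i j * ‖w i - w j‖ := by
  have hw : ∀ i ∈ ({k}ᶜ : Finset ι), update w k u i = w i := fun i hi =>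
    update_of_ne (by simpa using hi) _ _
  have hrow : ∑ j ∈ {k}ᶜ, r k j * ‖u - update w k u j‖ = ∑ i ∈ {k}ᶜ, r i k * ‖u - w i‖ :=
    sum_congr rfl fun i hi => by rw [hw i hi, hr]
  have hcol : ∑ i ∈ {k}ᶜ, r i k * ‖update w k u i - u‖ = ∑ i ∈ {k}ᶜ, r i k * ‖u - w i‖ :=
    sum_congr rfl fun i hi => by rw [hw i hi, norm_sub_rev]
  have hrest : ∑ i ∈ {k}ᶜ, ∑ j ∈ {k}ᶜ, r i j * ‖update w k u i - update w k u j‖ =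
      ∑ i ∈ {k}ᶜ, ∑ j ∈ {k}ᶜ, r i j * ‖w i - w j‖ :=
    sum_congr rfl fun i hi => sum_congr rfl fun j hj => by rw [hw i hi, hw j hj]
  simp only [Fintype.sum_eq_add_sum_compl k, update_self, sub_self, norm_zero, mul_zero,
    zero_add, sum_add_distrib, hrow, hcol, hrest, ← add_assoc, ← two_mul, mul_sum, mul_assoc]

theorem network_regularizer_block_gradient_general
    (d n : ℕ)
    (r : Fin n → Fin n → ℝ)
    (hrsym : ∀ i j, r i j = r j i)
    (k : Fin n) (w : Fin n → EuclideanSpace ℝ (Fin d))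
    (hw : ∀ i, r i k ≠ 0 → w i ≠ w k) :
    HasGradientAt
      (fun u : EuclideanSpace ℝ (Fin d) =>
        ∑ i, ∑ j,
          r i j * ‖(fun m => if m = k then u else w m) i
                    - (fun m => if m = k then u else w m) j‖)
      (∑ i, (2 * r i k / ‖w k - w i‖) • (w k - w i))
      (w k) := by
  simp only [← update_apply, sum_sum_mul_norm_update_sub_update hrsym]
  rw [Fintype.sum_eq_add_sum_compl k, sub_self, smul_zero, zero_add]
  refine (HasGradientAt.sum fun i _ => ?_).add_const _
  exact hasGradientAt_const_mul_norm_sub fun h => (hw i (right_ne_zero_of_mul h)).symm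

/-- Proposition 1 (per-block form): the partial gradient of the network
regularizer `Σ_{i,j} r_{ij} ‖w_i − w_j‖₂` with respect to the `k`-th block,
at a point where `w_i ≠ w_k` whenever `r i k ≠ 0`, equals
`2 Σ_i (r_{ik} / ‖w_k − w_i‖₂) • (w_k − w_i)`. -/
theorem network_regularizer_block_gradient
    (d n : ℕ) (hd : 0 < d) (hn : 0 < n)
    (r : Fin n → Fin n → ℝ)
    (hr : ∀ i j, 0 ≤ r i j) (hrsym : ∀ i j, r i j = r j i)
    (hrdiag : ∀ i, r i i = 0)
    (k : Fin n) (w : Fin n → EuclideanSpace ℝ (Fin d))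
    (hw : ∀ i, r i k ≠ 0 → w i ≠ w k) :
    HasGradientAt
      (fun u : EuclideanSpace ℝ (Fin d) =>
        ∑ i, ∑ j,
          r i j * ‖(fun m => if m = k then u else w m) i
                    - (fun m => if m = k then u else w m) j‖)
      (∑ i, (2 * r i k / ‖w k - w i‖) • (w k - w i))
      (w k) :=
  network_regularizer_block_gradient_general d n r hrsym k w hw
end

section
/- (Lemma 4.) Let d, n be positive natural numbers and let W^{(t)}, W^{(t+1)} ∈ ℝ^{n×d} be matrices with rows w_i^{(t)}, w_i^{(t+1)}, such that every entry of W^{(t)} is nonzero. Then Σ_{i=1}^n (Σ_{k=1}^d |w_i^{(t+1)}(k)|)² − Σ_{i=1}^n (Σ_{k=1}^d w_i^{(t+1)}(k)²/|w_i^{(t)}(k)|) · (Σ_{k=1}^d |w_i^{(t)}(k)|) − [ Σ_{i=1}^n (Σ_{k=1}^d |w_i^{(t)}(k)|)² − Σ_{i=1}^n (Σ_{k=1}^d w_i^{(t)}(k)²/|w_i^{(t)}(k)|) · (Σ_{k=1}^d |w_i^{(t)}(k)|) ] ≤ 0. -/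
/-- Lemma 4: the majorization step for the exclusive (ℓ₁,₂) regularizer. -/
theorem exclusive_regularizer_majorization
    (d n : ℕ) (hd : 0 < d) (hn : 0 < n)
    (Wt Wt1 : Matrix (Fin n) (Fin d) ℝ)
    (hWt : ∀ i k, Wt i k ≠ 0) :
    ((∑ i, (∑ k, |Wt1 i k|) ^ 2)
      - ∑ i, (∑ k, Wt1 i k ^ 2 / |Wt i k|) * (∑ k, |Wt i k|))
    - ((∑ i, (∑ k, |Wt i k|) ^ 2)
      - ∑ i, (∑ k, Wt i k ^ 2 / |Wt i k|) * (∑ k, |Wt i k|)) ≤ 0 := by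
  have h2 : ∀ i : Fin n, (∑ k, Wt i k ^ 2 / |Wt i k|) = ∑ k, |Wt i k| := by
    intro i
    refine Finset.sum_congr rfl fun k _ => ?_
    rw [← sq_abs, sq, mul_div_assoc, div_self (abs_ne_zero.mpr (hWt i k)), mul_one]
  have h1 : ∀ i : Fin n, (∑ k, |Wt1 i k|) ^ 2
      ≤ (∑ k, Wt1 i k ^ 2 / |Wt i k|) * (∑ k, |Wt i k|) := by
    intro i
    have hpos : ∀ k ∈ (Finset.univ : Finset (Fin d)), 0 < |Wt i k| :=
      fun k _ => abs_pos.mpr (hWt i k)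
    have hsum : 0 < ∑ k, |Wt i k| := by
      refine Finset.sum_pos hpos ?_
      exact ⟨⟨0, hd⟩, Finset.mem_univ _⟩
    have := Finset.sq_sum_div_le_sum_sq_div Finset.univ
      (fun k => |Wt1 i k|) hpos
    have h' : (∑ k, |Wt1 i k|) ^ 2 / (∑ k, |Wt i k|) ≤ ∑ k, Wt1 i k ^ 2 / |Wt i k| := by
      simpa [sq_abs] using this
    calc (∑ k, |Wt1 i k|) ^ 2
        = (∑ k, |Wt1 i k|) ^ 2 / (∑ k, |Wt i k|) * (∑ k, |Wt i k|) := by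
          rw [div_mul_cancel₀ _ hsum.ne']
      _ ≤ (∑ k, Wt1 i k ^ 2 / |Wt i k|) * (∑ k, |Wt i k|) :=
          mul_le_mul_of_nonneg_right h' hsum.le
  have hA : (∑ i, (∑ k, |Wt1 i k|) ^ 2)
      ≤ ∑ i, (∑ k, Wt1 i k ^ 2 / |Wt i k|) * (∑ k, |Wt i k|) :=
    Finset.sum_le_sum fun i _ => h1 i
  have hB : (∑ i, (∑ k, |Wt i k|) ^ 2)
      = ∑ i, (∑ k, Wt i k ^ 2 / |Wt i k|) * (∑ k, |Wt i k|) := by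
    refine Finset.sum_congr rfl fun i _ => ?_
    rw [h2 i, sq]
  linarith
end

section
/- (Lemma 5.) Let d, n be positive natural numbers, x_1,…,x_n ∈ ℝ^d, y_1,…,y_n ∈ ℝ, λ₁ ≥ 0, λ₂ ≥ 0, and r : Fin n → Fin n → ℝ with r i j ≥ 0. Let W^{(t)} = (w_1^{(t)},…,w_n^{(t)}) ∈ (ℝ^d)^n satisfy: w_i^{(t)} ≠ w_j^{(t)} whenever r i j ≠ 0, and w_i^{(t)}(k) ≠ 0 for all i, k. Define J(W) = Σ_i (y_i − ⟨w_i,x_i⟩)² + λ₁ Σ_{i,j} r_{ij}‖w_i − w_j‖₂ + λ₂ Σ_i (Σ_k |w_i(k)|)², and the surrogate J̃(W) = Σ_i (y_i − ⟨w_i,x_i⟩)² + λ₁ Σ_{i,j} r_{ij}‖w_i − w_j‖₂²/(2‖w_i^{(t)} − w_j^{(t)}‖₂) + λ₂ Σ_i (Σ_k w_i(k)²/|w_i^{(t)}(k)|)·(Σ_k |w_i^{(t)}(k)|) (terms with r_{ij} = 0 being zero). Then for every W^{(t+1)} ∈ (ℝ^d)^n, J(W^{(t+1)}) − J(W^{(t)})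 ≤ J̃(W^{(t+1)}) − J̃(W^{(t)}). -/
open scoped RealInnerProductSpace

/-- Lemma 5: the decrease of the localized-Lasso objective `J` is bounded by the
decrease of its iteratively-reweighted least-squares surrogate `J̃` built at `W^{(t)}`. -/
theorem objective_decrease_bounded_by_surrogate_decrease
    (d n : ℕ) (hd : 0 < d) (hn : 0 < n)
    (x : Fin n → EuclideanSpace ℝ (Fin d)) (y : Fin n → ℝ)
    (lam1 lam2 : ℝ) (hlam1 : 0 ≤ lam1) (hlam2 : 0 ≤ lam2)
    (r : Fin n → Fin n → ℝ) (hr : ∀ i j, 0 ≤ r i j)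
    (Wt : Fin n → EuclideanSpace ℝ (Fin d))
    (hWt_net : ∀ i j, r i j ≠ 0 → Wt i ≠ Wt j)
    (hWt_nz : ∀ i k, Wt i k ≠ 0)
    (J Jtil : (Fin n → EuclideanSpace ℝ (Fin d)) → ℝ)
    (hJ : ∀ W, J W =
      (∑ i, (y i - ⟪W i, x i⟫) ^ 2)
      + lam1 * ∑ i, ∑ j, r i j * ‖W i - W j‖
      + lam2 * ∑ i, (∑ k, |W i k|) ^ 2)
    (hJtil : ∀ W, Jtil W =
      (∑ i, (y i - ⟪W i, x i⟫) ^ 2)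
      + lam1 * ∑ i, ∑ j, r i j * ‖W i - W j‖ ^ 2 / (2 * ‖Wt i - Wt j‖)
      + lam2 * ∑ i, (∑ k, (W i k) ^ 2 / |Wt i k|) * (∑ k, |Wt i k|)) :
    ∀ Wt1 : Fin n → EuclideanSpace ℝ (Fin d),
      J Wt1 - J Wt ≤ Jtil Wt1 - Jtil Wt := by
  intro W1
  rw [hJ W1, hJ Wt, hJtil W1, hJtil Wt]
  -- network term, per pair
  have hA : ∀ i j, r i j * ‖W1 i - W1 j‖ - r i j * ‖W1 i - W1 j‖ ^ 2 / (2 * ‖Wt i - Wt j‖)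
      ≤ r i j * ‖Wt i - Wt j‖ - r i j * ‖Wt i - Wt j‖ ^ 2 / (2 * ‖Wt i - Wt j‖) := by
    intro i j
    by_cases hrij : r i j = 0
    · simp [hrij]
    · have hc : 0 < ‖Wt i - Wt j‖ := by
        rw [norm_pos_iff, sub_ne_zero]
        exact hWt_net i j hrij
      set a := ‖W1 i - W1 j‖ with ha
      set c := ‖Wt i - Wt j‖ with hcc
      have key : a - a ^ 2 / (2 * c) ≤ c / 2 := by
        rw [sub_le_iff_le_add, ← sub_le_iff_le_add', le_div_iff₀ (by positivity)]
        nlinarith [sq_nonneg (a - c)]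
      have e1 : r i j * c ^ 2 / (2 * c) = r i j * (c / 2) := by
        field_simp
      have e2 : r i j * a ^ 2 / (2 * c) = r i j * (a ^ 2 / (2 * c)) := by ring
      rw [e1, e2, ← mul_sub, ← mul_sub]
      have : c - c / 2 = c / 2 := by ring
      rw [this]
      exact mul_le_mul_of_nonneg_left key (hr i j)
  -- lasso term, per row
  have hB : ∀ i : Fin n,
      (∑ k, |W1 i k|) ^ 2 - (∑ k, (W1 i k) ^ 2 / |Wt i k|) * (∑ k, |Wt i k|)
      ≤ (∑ k, |Wt i k|) ^ 2 - (∑ k, (Wt i k) ^ 2 / |Wt i k|) * (∑ k, |Wt i k|) := by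
    intro i
    have hv : ∀ k : Fin d, (0:ℝ) < |Wt i k| := fun k => abs_pos.mpr (hWt_nz i k)
    have hvs : 0 < ∑ k, |Wt i k| := by
      apply Finset.sum_pos (fun k _ => hv k)
      have : Nonempty (Fin d) := ⟨⟨0, hd⟩⟩
      exact Finset.univ_nonempty
    have heq : ∀ k : Fin d, (Wt i k) ^ 2 / |Wt i k| = |Wt i k| := by
      intro k
      rw [← sq_abs, sq, mul_div_assoc, div_self (hv k).ne', mul_one]
    have hrhs : (∑ k, (Wt i k) ^ 2 / |Wt i k|) = ∑ k, |Wt i k| := by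
      exact Finset.sum_congr rfl fun k _ => heq k
    rw [hrhs, sq]
    have hcs : (∑ k, |W1 i k|) ^ 2 ≤ (∑ k, (W1 i k) ^ 2 / |Wt i k|) * (∑ k, |Wt i k|) := by
      have h := Finset.sq_sum_div_le_sum_sq_div Finset.univ (fun k => |W1 i k|)
        (fun k _ => hv k)
      have h2 : (∑ k, |W1 i k| ^ 2 / |Wt i k|) = ∑ k, (W1 i k) ^ 2 / |Wt i k| := by
        exact Finset.sum_congr rfl fun k _ => by rw [sq_abs]
      rw [h2] at h
      calc (∑ k, |W1 i k|) ^ 2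
          = (∑ k, |W1 i k|) ^ 2 / (∑ k, |Wt i k|) * (∑ k, |Wt i k|) := by
            field_simp
        _ ≤ (∑ k, (W1 i k) ^ 2 / |Wt i k|) * (∑ k, |Wt i k|) :=
            mul_le_mul_of_nonneg_right h hvs.le
    linarith
  -- assemble
  have hAsum : (∑ i, ∑ j, r i j * ‖W1 i - W1 j‖)
      - (∑ i, ∑ j, r i j * ‖W1 i - W1 j‖ ^ 2 / (2 * ‖Wt i - Wt j‖))
      ≤ (∑ i, ∑ j, r i j * ‖Wt i - Wt j‖)
      - (∑ i, ∑ j, r i j * ‖Wt i - Wt j‖ ^ 2 / (2 * ‖Wt i - Wt j‖)) := by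
    rw [← Finset.sum_sub_distrib, ← Finset.sum_sub_distrib]
    refine Finset.sum_le_sum fun i _ => ?_
    rw [← Finset.sum_sub_distrib, ← Finset.sum_sub_distrib]
    exact Finset.sum_le_sum fun j _ => hA i j
  have hBsum : (∑ i, (∑ k, |W1 i k|) ^ 2)
      - (∑ i, (∑ k, (W1 i k) ^ 2 / |Wt i k|) * (∑ k, |Wt i k|))
      ≤ (∑ i, (∑ k, |Wt i k|) ^ 2)
      - (∑ i, (∑ k, (Wt i k) ^ 2 / |Wt i k|) * (∑ k, |Wt i k|)) := by
    rw [← Finset.sum_sub_distrib, ← Finset.sum_sub_distrib]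
    exact Finset.sum_le_sum fun i _ => hB i
  have h1 := mul_le_mul_of_nonneg_left hAsum hlam1
  have h2 := mul_le_mul_of_nonneg_left hBsum hlam2
  rw [mul_sub, mul_sub] at h1 h2
  linarith
end

section
/- (Monotone-decrease part of Theorem 1.) Let d, n be positive natural numbers, x_1,…,x_n ∈ ℝ^d, y_1,…,y_n ∈ ℝ, λ₁ ≥ 0, λ₂ ≥ 0, and r : Fin n → Fin n → ℝ with r i j ≥ 0. Let W^{(t)} ∈ (ℝ^d)^n satisfy: w_i^{(t)} ≠ w_j^{(t)} whenever r i j ≠ 0, and w_i^{(t)}(k) ≠ 0 for all i, k. Define J(W) = Σ_i (y_i − ⟨w_i,x_i⟩)² + λ₁ Σ_{i,j} r_{ij}‖w_i − w_j‖₂ + λ₂ Σ_i (Σ_k |w_i(k)|)², and J̃(W) = Σ_i (y_i − ⟨w_i,x_i⟩)² + λ₁ Σ_{i,j} r_{ij}‖w_i − w_j‖₂²/(2‖w_i^{(t)} − w_j^{(t)}‖₂) + λ₂ Σ_i (Σ_k w_i(k)²/|w_i^{(t)}(k)|)·(Σ_k |w_i^{(t)}(k)|). If W^{(t+1)} ∈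 (ℝ^d)^n satisfies J̃(W^{(t+1)}) ≤ J̃(W^{(t)}), then J(W^{(t+1)}) ≤ J(W^{(t)}). -/
open scoped RealInnerProductSpace

/-- Monotone-decrease part of Theorem 1: if the surrogate `J̃` does not increase
from `W^{(t)}` to `W^{(t+1)}`, then neither does the localized-Lasso objective `J`. -/
theorem surrogate_decrease_implies_objective_decrease
    (d n : ℕ) (hd : 0 < d) (hn : 0 < n)
    (x : Fin n → EuclideanSpace ℝ (Fin d)) (y : Fin n → ℝ)
    (lam1 lam2 : ℝ) (hlam1 : 0 ≤ lam1) (hlam2 : 0 ≤ lam2)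
    (r : Fin n → Fin n → ℝ) (hr : ∀ i j, 0 ≤ r i j)
    (Wt : Fin n → EuclideanSpace ℝ (Fin d))
    (hWt_net : ∀ i j, r i j ≠ 0 → Wt i ≠ Wt j)
    (hWt_nz : ∀ i k, Wt i k ≠ 0)
    (J Jtil : (Fin n → EuclideanSpace ℝ (Fin d)) → ℝ)
    (hJ : ∀ W, J W =
      (∑ i, (y i - ⟪W i, x i⟫) ^ 2)
      + lam1 * ∑ i, ∑ j, r i j * ‖W i - W j‖
      + lam2 * ∑ i, (∑ k, |W i k|) ^ 2)
    (hJtil : ∀ W, Jtil W =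
      (∑ i, (y i - ⟪W i, x i⟫) ^ 2)
      + lam1 * ∑ i, ∑ j, r i j * ‖W i - W j‖ ^ 2 / (2 * ‖Wt i - Wt j‖)
      + lam2 * ∑ i, (∑ k, (W i k) ^ 2 / |Wt i k|) * (∑ k, |Wt i k|)) :
    ∀ Wt1 : Fin n → EuclideanSpace ℝ (Fin d),
      Jtil Wt1 ≤ Jtil Wt → J Wt1 ≤ J Wt := by
  intro W1 hle
  have cpos : ∀ i j, r i j ≠ 0 → 0 < ‖Wt i - Wt j‖ := by
    intro i j h
    rw [norm_pos_iff, sub_ne_zero]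
    exact hWt_net i j h
  -- the slack sum
  set S : ℝ := ∑ i, ∑ j, r i j * ‖Wt i - Wt j‖ / 2 with hS
  -- network term inequality
  have net_le : ∀ W : Fin n → EuclideanSpace ℝ (Fin d),
      (∑ i, ∑ j, r i j * ‖W i - W j‖) ≤
      (∑ i, ∑ j, r i j * ‖W i - W j‖ ^ 2 / (2 * ‖Wt i - Wt j‖)) + S := by
    intro W
    rw [hS, ← Finset.sum_add_distrib]
    apply Finset.sum_le_sum
    intro i _
    rw [← Finset.sum_add_distrib]
    apply Finset.sum_le_sum
    intro j _
    by_cases h : r i j = 0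
    · simp [h]
    · have hc := cpos i j h
      have haux : ‖W i - W j‖ ≤
          ‖W i - W j‖ ^ 2 / (2 * ‖Wt i - Wt j‖) + ‖Wt i - Wt j‖ / 2 := by
        rw [← sub_le_iff_le_add, le_div_iff₀ (by positivity)]
        nlinarith [sq_nonneg (‖W i - W j‖ - ‖Wt i - Wt j‖)]
      have := mul_le_mul_of_nonneg_left haux (hr i j)
      calc r i j * ‖W i - W j‖
          ≤ r i j * (‖W i - W j‖ ^ 2 / (2 * ‖Wt i - Wt j‖) + ‖Wt i - Wt j‖ / 2) := this
        _ = r i j * ‖W i - W j‖ ^ 2 / (2 * ‖Wt i - Wt j‖) + r i j * ‖Wt i - Wt j‖ / 2 := by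
            ring
  -- network term equality at Wt
  have net_eq : (∑ i, ∑ j, r i j * ‖Wt i - Wt j‖) =
      (∑ i, ∑ j, r i j * ‖Wt i - Wt j‖ ^ 2 / (2 * ‖Wt i - Wt j‖)) + S := by
    rw [hS, ← Finset.sum_add_distrib]
    refine Finset.sum_congr rfl fun i _ => ?_
    rw [← Finset.sum_add_distrib]
    refine Finset.sum_congr rfl fun j _ => ?_
    by_cases h : r i j = 0
    · simp [h]
    · have hc := cpos i j h
      field_simp
      ring
  -- exclusive term: Cauchy-Schwarz
  have excl_le : ∀ W : Fin n → EuclideanSpace ℝ (Fin d), ∀ i,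
      (∑ k, |W i k|) ^ 2 ≤ (∑ k, (W i k) ^ 2 / |Wt i k|) * (∑ k, |Wt i k|) := by
    intro W i
    have habs : ∀ k : Fin d, (0 : ℝ) < |Wt i k| := fun k => abs_pos.2 (hWt_nz i k)
    have hCS := Finset.sum_mul_sq_le_sq_mul_sq Finset.univ
      (fun k => |W i k| / Real.sqrt |Wt i k|) (fun k => Real.sqrt |Wt i k|)
    have e1 : ∀ k : Fin d, |W i k| / Real.sqrt |Wt i k| * Real.sqrt |Wt i k| = |W i k| := by
      intro k
      exact div_mul_cancel₀ _ (ne_of_gt (Real.sqrt_pos.2 (habs k)))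
    have e2 : ∀ k : Fin d, (|W i k| / Real.sqrt |Wt i k|) ^ 2 = (W i k) ^ 2 / |Wt i k| := by
      intro k
      rw [div_pow, sq_abs, Real.sq_sqrt (abs_nonneg _)]
    have e3 : ∀ k : Fin d, (Real.sqrt |Wt i k|) ^ 2 = |Wt i k| := fun k =>
      Real.sq_sqrt (abs_nonneg _)
    simpa only [e1, e2, e3] using hCS
  -- exclusive term equality at Wt
  have excl_eq : ∀ i : Fin n,
      (∑ k, |Wt i k|) ^ 2 = (∑ k, (Wt i k) ^ 2 / |Wt i k|) * (∑ k, |Wt i k|) := by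
    intro i
    have : (∑ k, (Wt i k) ^ 2 / |Wt i k|) = ∑ k, |Wt i k| := by
      refine Finset.sum_congr rfl fun k _ => ?_
      have hk : |Wt i k| ≠ 0 := abs_ne_zero.2 (hWt_nz i k)
      rw [← sq_abs, sq, mul_div_assoc, div_self hk, mul_one]
    rw [this, sq]
  -- main comparison: J W ≤ Jtil W + lam1 * S for all W
  have hA : ∀ W : Fin n → EuclideanSpace ℝ (Fin d), J W ≤ Jtil W + lam1 * S := by
    intro W
    rw [hJ, hJtil]
    have h1 := mul_le_mul_of_nonneg_left (net_le W) hlam1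
    rw [mul_add] at h1
    have h2 : (∑ i, (∑ k, |W i k|) ^ 2) ≤
        ∑ i, (∑ k, (W i k) ^ 2 / |Wt i k|) * (∑ k, |Wt i k|) :=
      Finset.sum_le_sum fun i _ => excl_le W i
    have h2' := mul_le_mul_of_nonneg_left h2 hlam2
    linarith
  -- equality at Wt
  have hB : J Wt = Jtil Wt + lam1 * S := by
    rw [hJ, hJtil, net_eq]
    have h2 : (∑ i, (∑ k, |Wt i k|) ^ 2) =
        ∑ i, (∑ k, (Wt i k) ^ 2 / |Wt i k|) * (∑ k, |Wt i k|) :=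
      Finset.sum_congr rfl fun i _ => excl_eq i
    rw [h2]
    ring
  calc J W1 ≤ Jtil W1 + lam1 * S := hA W1
    _ ≤ Jtil Wt + lam1 * S := by linarith
    _ = J Wt := hB.symm
end
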